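/- Let α : ℕ → ℝ satisfy α(n) → +∞ and α(n) = o(log n), and let p(n) = (log n + α(n))/n. Then with high probability no two small vertices of the Erdős–Rényi random graph G(n, p(n)) are adjacent or share a common neighbor; that is, the probability that every pair of distinct vertices of G(n,p(n)) each having degree less than (log n)/100 is at graph distance greater than 2 tends to 1 as n tends to infinity. -/

import Mathlib

open Classical in
/-- The probability that the Erdős–Rényi random graph `G(n,p)` lies in the event `A`:
each graph `G` on `Fin n` has probability `p^(#edges of G) * (1-p)^((n choose 2) - #edges of G)`. -/
noncomputable def erProb (n : ℕ) (p : ℝ) (A : Set (SimpleGraph (Fin n))) : ℝ :=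
  ∑ G : SimpleGraph (Fin n),
    if G ∈ A then p ^ G.edgeSet.ncard * (1 - p) ^ (n.choose 2 - G.edgeSet.ncard) else 0

/-!
Fix `u ≠ v` and the edge set `r` of a path of length at most two from `u` to `v`. If `u` and `v`
both have degree `< K`, fewer than `2K` edges of `G` meet `{u, v}`, so on the event `r ⊆ E(G)` the
weight `100 ^ (2K - #{edges of G meeting u or v})` is at least `1` (exponential Markov inequality).
The edges being independent, its expectation is a product over the `2n - 3` potential edges at `u`
or `v`, at most `100 ^ (2K) * p ^ #r * (1 - 99p/100) ^ (2n - 5)`. A union bound over the `n²`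
pairs and the `n` middle vertices bounds the failure probability by
`n² 100^(2K) (p + n p²) (1 - 99p/100)^(2n - 5)`, which for `K = log n / 100` and
`|n p - log n| ≤ log n / 10` is `O(log² n / √n)`.
-/

open Finset

namespace Finset

variable {ι R : Type*} [DecidableEq ι] [CommRing R]

theorem sum_powerset_pow_mul_pow_mul_prod (p : R) (s : Finset ι) (f g : ι → R) :
    ∑ t ∈ s.powerset, p ^ #t * (1 - p) ^ (#s - #t) * ((∏ i ∈ t, f i) * ∏ i ∈ s \ t, g i)
      = ∏ i ∈ s, (p * f i + (1 - p) * g i) := by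
  rw [prod_add]
  refine sum_congr rfl fun t ht => ?_
  rw [prod_mul_distrib, prod_mul_distrib, prod_const, prod_const,
    card_sdiff_of_subset (mem_powerset.1 ht)]
  ring

theorem sum_powerset_pow_mul_pow_mul_ite_subset (p c : R) {r i s : Finset ι} (hri : r ⊆ i)
    (his : i ⊆ s) :
    ∑ t ∈ s.powerset, p ^ #t * (1 - p) ^ (#s - #t) * (if r ⊆ t then c ^ #(t ∩ i) else 0)
      = (p * c) ^ #r * (p * c + (1 - p)) ^ #(i \ r) := by
  have hterm (t : Finset ι) : (if r ⊆ t then c ^ #(t ∩ i) else 0)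
      = (∏ e ∈ t, if e ∈ i then c else 1) * ∏ e ∈ s \ t, if e ∉ r then 1 else 0 := by
    have hrt : (∀ e ∈ s \ t, e ∉ r) ↔ r ⊆ t := by
      simp only [mem_sdiff, and_imp, not_imp_not]
      exact ⟨fun h e he => h e (hri.trans his he) he, fun h e _ he => h he⟩
    simp only [prod_ite_mem, prod_const, prod_boole, hrt, mul_ite, mul_one, mul_zero]
  simp_rw [hterm, sum_powerset_pow_mul_pow_mul_prod]
  rw [← prod_subset his fun e _ he => by simp [he, show e ∉ r from fun her => he (hri her)],
    ← prod_sdiff hri,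
    prod_congr (g := fun _ => p * c + (1 - p)) rfl fun e he => by
      simp [(mem_sdiff.1 he).1, (mem_sdiff.1 he).2], prod_const,
    prod_congr (g := fun _ => p * c) rfl fun e he => by simp [hri he, he], prod_const]
  ring

end Finset

namespace SimpleGraph

open Classical

variable {V : Type*} [Fintype V] [DecidableEq V]

noncomputable def erExpect (p : ℝ) (f : SimpleGraph V → ℝ) : ℝ :=
  ∑ G : SimpleGraph V,
    p ^ #G.edgeFinset * (1 - p) ^ (#(⊤ : SimpleGraph V).edgeFinset - #G.edgeFinset) * f G

theorem erExpect_comp_edgeFinset (p : ℝ) (F : Finset (Sym2 V) → ℝ) :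
    erExpect p (fun G => F G.edgeFinset)
      = ∑ t ∈ (⊤ : SimpleGraph V).edgeFinset.powerset,
          p ^ #t * (1 - p) ^ (#(⊤ : SimpleGraph V).edgeFinset - #t) * F t := by
  refine sum_nbij' (fun G => G.edgeFinset) (fun t => fromEdgeSet t)
    (fun G _ => mem_powerset.2 (edgeFinset_mono le_top)) (fun _ _ => mem_univ _)
    (fun G _ => by simp) (fun t ht => ?_) (fun _ _ => rfl)
  rw [← coe_inj, coe_edgeFinset, edgeSet_fromEdgeSet, sdiff_eq_left, Set.disjoint_left]
  intro e het hdiag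
  simpa [hdiag] using mem_powerset.1 ht het

theorem erExpect_const_one (p : ℝ) : erExpect (V := V) p (fun _ => 1) = 1 :=
  (erExpect_comp_edgeFinset p fun _ => 1).trans (by simp [sum_pow_mul_eq_add_pow])

theorem erExpect_mono {p : ℝ} (hp₀ : 0 ≤ p) (hp₁ : p ≤ 1) {f g : SimpleGraph V → ℝ}
    (h : ∀ G, f G ≤ g G) : erExpect p f ≤ erExpect p g :=
  sum_le_sum fun G _ => mul_le_mul_of_nonneg_left (h G) (by
    have : 0 ≤ 1 - p := by linarith
    positivity)

theorem erExpect_add (p : ℝ) (f g : SimpleGraph V → ℝ) :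
    erExpect p (fun G => f G + g G) = erExpect p f + erExpect p g := by
  simp only [erExpect, mul_add, sum_add_distrib]

theorem erExpect_const_mul (p c : ℝ) (f : SimpleGraph V → ℝ) :
    erExpect p (fun G => c * f G) = c * erExpect p f := by
  simp only [erExpect, mul_sum]
  exact sum_congr rfl fun G _ => by ring

theorem erExpect_sum {ι : Type*} (p : ℝ) (s : Finset ι) (f : ι → SimpleGraph V → ℝ) :
    erExpect p (fun G => ∑ i ∈ s, f i G) = ∑ i ∈ s, erExpect p (f i) := by
  simp only [erExpect, mul_sum]
  exact sum_comm

def edgesAt (u v : V) : Finset (Sym2 V) :=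
  (⊤ : SimpleGraph V).incidenceFinset u ∪ (⊤ : SimpleGraph V).incidenceFinset v

theorem card_edgesAt_add_one {u v : V} (huv : u ≠ v) :
    #(edgesAt u v) + 1 = 2 * (Fintype.card V - 1) := by
  have hinter : (⊤ : SimpleGraph V).incidenceFinset u ∩ (⊤ : SimpleGraph V).incidenceFinset v
      = {s(u, v)} := by
    rw [← coe_inj, coe_inter, coe_singleton, coe_incidenceFinset, coe_incidenceFinset]
    exact incidenceSet_inter_incidenceSet_of_adj _ huv
  have h := card_union_add_card_inter ((⊤ : SimpleGraph V).incidenceFinset u)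
    ((⊤ : SimpleGraph V).incidenceFinset v)
  rwa [hinter, card_singleton, card_incidenceFinset_eq_degree, card_incidenceFinset_eq_degree,
    complete_graph_degree, complete_graph_degree, ← two_mul] at h

theorem card_edgeFinset_inter_edgesAt_le (G : SimpleGraph V) (u v : V) :
    #(G.edgeFinset ∩ edgesAt u v) ≤ G.degree u + G.degree v := by
  rw [← card_incidenceFinset_eq_degree, ← card_incidenceFinset_eq_degree]
  refine (card_le_card fun e he => ?_).trans (card_union_le _ _)
  simp only [edgesAt, mem_inter, mem_union, mem_incidenceFinset, incidenceSet,
    Set.mem_ofPred_eq, mem_edgeFinset] at he ⊢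
  tauto

noncomputable def chernoffWeight (u v : V) (r : Finset (Sym2 V)) (G : SimpleGraph V) : ℝ :=
  if r ⊆ G.edgeFinset then (1 / 100 : ℝ) ^ #(G.edgeFinset ∩ edgesAt u v) else 0

theorem chernoffWeight_nonneg (u v : V) (r : Finset (Sym2 V)) (G : SimpleGraph V) :
    0 ≤ chernoffWeight u v r G := by
  unfold chernoffWeight
  split_ifs <;> positivity

theorem erExpect_chernoffWeight (p : ℝ) {u v : V} {r : Finset (Sym2 V)} (hr : r ⊆ edgesAt u v) :
    erExpect p (chernoffWeight u v r)
      = (p / 100) ^ #r * (1 - 99 * p / 100) ^ #(edgesAt u v \ r) := by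
  have hsub : edgesAt u v ⊆ (⊤ : SimpleGraph V).edgeFinset :=
    union_subset (incidenceFinset_subset _ _) (incidenceFinset_subset _ _)
  have h := erExpect_comp_edgeFinset p
    fun t => if r ⊆ t then (1 / 100 : ℝ) ^ #(t ∩ edgesAt u v) else 0
  rw [sum_powerset_pow_mul_pow_mul_ite_subset _ _ hr hsub] at h
  exact h.trans (by ring)

theorem one_le_chernoffWeight {K : ℝ} {G : SimpleGraph V} {u v : V} {r : Finset (Sym2 V)}
    (hu : (G.degree u : ℝ) < K) (hv : (G.degree v : ℝ) < K) (hr : r ⊆ G.edgeFinset) :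
    1 ≤ (100 : ℝ) ^ (2 * K) * chernoffWeight u v r G := by
  set m := #(G.edgeFinset ∩ edgesAt u v)
  have hm : (m : ℝ) ≤ 2 * K := by
    have := card_edgeFinset_inter_edgesAt_le G u v
    have : (m : ℝ) ≤ G.degree u + G.degree v := by exact_mod_cast this
    linarith
  rw [chernoffWeight, if_pos hr]
  calc (1 : ℝ) = (100 : ℝ) ^ (m : ℝ) * (1 / 100) ^ m := by
        rw [Real.rpow_natCast, ← mul_pow]; norm_num
    _ ≤ (100 : ℝ) ^ (2 * K) * (1 / 100) ^ m := by gcongr; norm_num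

noncomputable def nearPairWeight (u v : V) (G : SimpleGraph V) : ℝ :=
  chernoffWeight u v {s(u, v)} G + ∑ w ∈ univ \ {u, v}, chernoffWeight u v {s(u, w), s(w, v)} G

theorem nearPairWeight_nonneg (u v : V) (G : SimpleGraph V) : 0 ≤ nearPairWeight u v G :=
  add_nonneg (chernoffWeight_nonneg _ _ _ _) (sum_nonneg fun _ _ => chernoffWeight_nonneg _ _ _ _)

def smallVerticesFarApart (K : ℝ) : Set (SimpleGraph V) :=
  {G | ∀ u v : V, u ≠ v → ((G.neighborSet u).ncard : ℝ) < K →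
    ((G.neighborSet v).ncard : ℝ) < K → (2 : ℕ∞) < G.edist u v}

theorem one_le_sum_nearPairWeight {K : ℝ} {G : SimpleGraph V}
    (hG : G ∉ smallVerticesFarApart K) :
    1 ≤ (100 : ℝ) ^ (2 * K) * ∑ x ∈ univ.offDiag, nearPairWeight x.1 x.2 G := by
  simp only [smallVerticesFarApart, Set.mem_ofPred_eq, not_forall, two_lt_edist_iff] at hG
  obtain ⟨u, v, huv, hu, hv, hnear⟩ := hG
  rw [Set.ncard_eq_toFinset_card', ← neighborFinset_def, card_neighborFinset_eq_degree] at hu hv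
  have hpair : nearPairWeight u v G ≤ ∑ x ∈ univ.offDiag, nearPairWeight x.1 x.2 G :=
    single_le_sum (f := fun x => nearPairWeight x.1 x.2 G) (fun x _ => nearPairWeight_nonneg _ _ _)
      (show (u, v) ∈ univ.offDiag from mem_offDiag.2 ⟨mem_univ u, mem_univ v, huv⟩)
  refine le_trans ?_ (mul_le_mul_of_nonneg_left hpair (by positivity))
  rw [nearPairWeight]
  by_cases hadj : G.Adj u v
  · refine (one_le_chernoffWeight hu hv (r := {s(u, v)}) ?_).trans ?_
    · simpa using hadj
    · gcongr
      exact le_add_of_nonneg_right (sum_nonneg fun _ _ => chernoffWeight_nonneg _ _ _ _)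
  · obtain ⟨w, hw⟩ : (G.commonNeighbors u v).Nonempty := by
      by_contra h
      exact hnear ⟨huv, hadj, Set.not_nonempty_iff_eq_empty.1 h⟩
    rw [mem_commonNeighbors] at hw
    have hw' : w ∈ univ \ {u, v} := by
      simp [hw.1.ne', hw.2.ne']
    refine (one_le_chernoffWeight hu hv (r := {s(u, w), s(w, v)}) ?_).trans ?_
    · simp [insert_subset_iff, hw.1, hw.2.symm]
    · gcongr
      exact le_add_of_nonneg_of_le (chernoffWeight_nonneg _ _ _ _)
        (single_le_sum (f := fun w => chernoffWeight u v {s(u, w), s(w, v)} G)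
          (fun _ _ => chernoffWeight_nonneg _ _ _ _) hw')

theorem erExpect_nearPairWeight_le {p : ℝ} (hp₀ : 0 ≤ p) (hp₁ : p ≤ 1) {u v : V}
    (huv : u ≠ v) :
    erExpect p (nearPairWeight u v)
      ≤ (p + Fintype.card V * p ^ 2) * (1 - 99 * p / 100) ^ (2 * Fintype.card V - 5) := by
  set q := 1 - 99 * p / 100 with hq
  have hq₀ : 0 ≤ q := by linarith
  have hq₁ : q ≤ 1 := by linarith
  have hedge {r : Finset (Sym2 V)} (hr : r ⊆ edgesAt u v) (hcard : #r ≤ 2) :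
      erExpect p (chernoffWeight u v r) ≤ p ^ #r * q ^ (2 * Fintype.card V - 5) := by
    rw [erExpect_chernoffWeight p hr, card_sdiff_of_subset hr]
    have := card_edgesAt_add_one huv
    exact mul_le_mul (pow_le_pow_left₀ (by positivity) (by linarith) _)
      (pow_le_pow_of_le_one hq₀ hq₁ (by omega)) (by positivity) (by positivity)
  have hmem_left {w : V} (hw : u ≠ w) : s(u, w) ∈ edgesAt u v :=
    mem_union_left _ ((mem_incidenceFinset _ _ _).2 ⟨by simpa using hw, Sym2.mem_mk_left _ _⟩)
  have hmem_right {w : V} (hw : w ≠ v) : s(w, v) ∈ edgesAt u v :=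
    mem_union_right _ ((mem_incidenceFinset _ _ _).2 ⟨by simpa using hw, Sym2.mem_mk_right _ _⟩)
  have hadj : erExpect p (chernoffWeight u v {s(u, v)}) ≤ p * q ^ (2 * Fintype.card V - 5) := by
    simpa using hedge (singleton_subset_iff.2 (hmem_left huv)) (by simp)
  have hcommon {w : V} (hw : w ∈ univ \ {u, v}) :
      erExpect p (chernoffWeight u v {s(u, w), s(w, v)})
        ≤ p ^ 2 * q ^ (2 * Fintype.card V - 5) := by
    simp only [mem_sdiff, mem_univ, mem_insert, mem_singleton, not_or, true_and] at hw
    have hne : s(u, w) ≠ s(w, v) := by simp [Ne.symm hw.1, huv]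
    have hr : {s(u, w), s(w, v)} ⊆ edgesAt u v :=
      insert_subset (hmem_left (Ne.symm hw.1)) (singleton_subset_iff.2 (hmem_right hw.2))
    simpa [card_pair hne] using hedge hr card_le_two
  calc erExpect p (nearPairWeight u v)
      = erExpect p (chernoffWeight u v {s(u, v)})
        + ∑ w ∈ univ \ {u, v}, erExpect p (chernoffWeight u v {s(u, w), s(w, v)}) := by
        rw [← erExpect_sum, ← erExpect_add]; rfl
    _ ≤ p * q ^ (2 * Fintype.card V - 5)
          + ∑ w ∈ univ \ {u, v}, p ^ 2 * q ^ (2 * Fintype.card V - 5) :=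
        add_le_add hadj (sum_le_sum fun w hw => hcommon hw)
    _ ≤ p * q ^ (2 * Fintype.card V - 5)
          + Fintype.card V * (p ^ 2 * q ^ (2 * Fintype.card V - 5)) := by
        rw [sum_const, nsmul_eq_mul]
        gcongr
        exact_mod_cast card_le_univ _
    _ = (p + Fintype.card V * p ^ 2) * q ^ (2 * Fintype.card V - 5) := by ring

noncomputable def nearPairBound (N : ℕ) (p K : ℝ) : ℝ :=
  N ^ 2 * (100 : ℝ) ^ (2 * K) * (p + N * p ^ 2) * (1 - 99 * p / 100) ^ (2 * N - 5)

theorem one_sub_erExpect_smallVerticesFarApart_le {p : ℝ} (hp₀ : 0 ≤ p) (hp₁ : p ≤ 1)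
    (K : ℝ) :
    1 - erExpect p (fun G : SimpleGraph V => if G ∈ smallVerticesFarApart K then 1 else 0)
      ≤ nearPairBound (Fintype.card V) p K := by
  set B := (p + Fintype.card V * p ^ 2) * (1 - 99 * p / 100) ^ (2 * Fintype.card V - 5)
  have hcompl :
      1 - erExpect p (fun G : SimpleGraph V => if G ∈ smallVerticesFarApart K then 1 else 0)
      = erExpect p (fun G : SimpleGraph V => if G ∈ smallVerticesFarApart K then 0 else 1) := by
    rw [sub_eq_iff_eq_add', ← erExpect_add]
    convert (erExpect_const_one (V := V) p).symm using 2
    ext G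
    split_ifs <;> norm_num
  calc 1 - erExpect p (fun G : SimpleGraph V => if G ∈ smallVerticesFarApart K then 1 else 0)
      ≤ erExpect p
          (fun G => (100 : ℝ) ^ (2 * K) * ∑ x ∈ univ.offDiag, nearPairWeight x.1 x.2 G) := by
        rw [hcompl]
        refine erExpect_mono hp₀ hp₁ fun G => ?_
        split_ifs with hG
        · exact mul_nonneg (by positivity) (sum_nonneg fun _ _ => nearPairWeight_nonneg _ _ _)
        · exact one_le_sum_nearPairWeight hG
    _ = (100 : ℝ) ^ (2 * K) * ∑ x ∈ univ.offDiag, erExpect p (nearPairWeight x.1 x.2) := by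
        rw [erExpect_const_mul, erExpect_sum]
    _ ≤ (100 : ℝ) ^ (2 * K) * ∑ _x ∈ (univ : Finset V).offDiag, B := by
        gcongr with x hx
        exact erExpect_nearPairWeight_le hp₀ hp₁ (mem_offDiag.1 hx).2.2
    _ ≤ (100 : ℝ) ^ (2 * K) * (Fintype.card V ^ 2 * B) := by
        have hB : 0 ≤ B := by
          have : 0 ≤ 1 - 99 * p / 100 := by linarith
          positivity
        rw [sum_const, nsmul_eq_mul, offDiag_card, card_univ]
        gcongr
        calc ((Fintype.card V * Fintype.card V - Fintype.card V : ℕ) : ℝ)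
            ≤ ((Fintype.card V * Fintype.card V : ℕ) : ℝ) := by gcongr; omega
          _ = (Fintype.card V : ℝ) ^ 2 := by push_cast; ring
    _ = nearPairBound (Fintype.card V) p K := by rw [nearPairBound]; ring

end SimpleGraph

open SimpleGraph Classical in
theorem erProb_eq_erExpect (n : ℕ) (p : ℝ) (A : Set (SimpleGraph (Fin n))) :
    erProb n p A = erExpect p (fun G => if G ∈ A then 1 else 0) := by
  rw [erProb, erExpect]
  refine sum_congr rfl fun G _ => ?_
  rw [← coe_edgeFinset, Set.ncard_coe_finset, card_edgeFinset_top_eq_card_choose_two,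
    Fintype.card_fin]
  split_ifs <;> simp

open Real Filter Topology SimpleGraph

theorem log_hundred_le_five : log 100 ≤ 5 := by
  rw [log_le_iff_le_exp (by norm_num), show (5 : ℝ) = (5 : ℕ) by norm_num, ← exp_one_pow]
  calc (100 : ℝ) ≤ 2.7182818283 ^ 5 := by norm_num
    _ ≤ exp 1 ^ 5 := by gcongr; exact exp_one_gt_d9.le

theorem two_mul_log_le_self {x : ℝ} (hx : 0 < x) : 2 * log x ≤ x := by
  rcases le_or_gt (log x) 0 with h | h
  · linarith
  · have := quadratic_le_exp_of_nonneg h.le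
    rw [exp_log hx] at this
    nlinarith [sq_nonneg (log x - 1)]

theorem nonneg_and_le_one_of_abs_mul_sub_log_le {n : ℕ} {p : ℝ} (hL : 1 ≤ log n)
    (hp : |n * p - log n| ≤ log n / 10) : 0 ≤ p ∧ p ≤ 1 := by
  have hn : (0 : ℝ) < n := Nat.cast_pos.2 (Nat.pos_of_ne_zero (by rintro rfl; norm_num at hL))
  obtain ⟨hlow, hup⟩ := abs_le.1 hp
  constructor <;> nlinarith [two_mul_log_le_self hn]

theorem nearPairBound_le {n : ℕ} {p : ℝ} (hL : 1 ≤ log n)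
    (hp : |n * p - log n| ≤ log n / 10) :
    nearPairBound n p (log n / 100) ≤ 6 * exp 5 * (log n ^ 2 * exp (-(log n / 2))) := by
  have hn : (0 : ℝ) < n := Nat.cast_pos.2 (Nat.pos_of_ne_zero (by rintro rfl; norm_num at hL))
  set L := log n with hLdef
  obtain ⟨hlow, hup⟩ : 9 / 10 * L ≤ n * p ∧ n * p ≤ 2 * L := by
    constructor <;> linarith [abs_le.1 hp]
  obtain ⟨hp₀, hp₁⟩ := nonneg_and_le_one_of_abs_mul_sub_log_le hL hp
  have hprefactor : (n : ℝ) ^ 2 * (p + n * p ^ 2) ≤ 6 * L ^ 2 * exp L := by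
    rw [hLdef, exp_log hn,
      show (n : ℝ) ^ 2 * (p + n * p ^ 2) = n * (n * p + (n * p) ^ 2) by ring]
    have : (n : ℝ) * p + (n * p) ^ 2 ≤ 6 * L ^ 2 := by nlinarith
    nlinarith
  have hhundred : (100 : ℝ) ^ (2 * (L / 100)) ≤ exp (L / 10) := by
    rw [rpow_def_of_pos (by norm_num)]
    gcongr
    nlinarith [log_hundred_le_five]
  have hdecay : (1 - 99 * p / 100) ^ (2 * n - 5) ≤ exp (5 - 17 / 10 * L) := by
    have hcast : (2 * n - 5 : ℝ) ≤ ((2 * n - 5 : ℕ) : ℝ) := by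
      have : ((2 * n : ℕ) : ℝ) ≤ ((2 * n - 5 : ℕ) : ℝ) + 5 := by exact_mod_cast (by omega)
      push_cast at this
      linarith
    calc (1 - 99 * p / 100) ^ (2 * n - 5) ≤ exp (-(99 * p / 100)) ^ (2 * n - 5) := by
          gcongr
          · linarith
          · linarith [add_one_le_exp (-(99 * p / 100))]
      _ = exp (-(99 * p / 100) * ((2 * n - 5 : ℕ) : ℝ)) := by
          rw [← exp_nat_mul, mul_comm]
      _ ≤ exp (5 - 17 / 10 * L) := by
          gcongr
          nlinarith
  have hexp : exp L * exp (L / 10) * exp (5 - 17 / 10 * L) = exp 5 * exp (-(3 / 5 * L)) := by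
    simp only [← exp_add]
    ring_nf
  calc nearPairBound n p (L / 100)
      = (n : ℝ) ^ 2 * (p + n * p ^ 2) * (100 : ℝ) ^ (2 * (L / 100))
          * (1 - 99 * p / 100) ^ (2 * n - 5) := by rw [nearPairBound]; ring
    _ ≤ 6 * L ^ 2 * exp L * exp (L / 10) * exp (5 - 17 / 10 * L) := by
        have : 0 ≤ 1 - 99 * p / 100 := by linarith
        gcongr
    _ = 6 * exp 5 * (L ^ 2 * exp (-(3 / 5 * L))) := by linear_combination 6 * L ^ 2 * hexp
    _ ≤ 6 * exp 5 * (L ^ 2 * exp (-(L / 2))) := by gcongr; linarith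

theorem tendsto_log_sq_mul_exp_neg_half_log :
    Tendsto (fun n : ℕ => log n ^ 2 * exp (-(log n / 2))) atTop (𝓝 0) := by
  have h := (tendsto_pow_mul_exp_neg_atTop_nhds_zero 2).comp
    ((tendsto_log_atTop.comp tendsto_natCast_atTop_atTop).atTop_div_const two_pos)
  convert h.const_mul 4 using 1
  · ext n; simp only [Function.comp]; ring
  · simp

theorem erProb_le_one {n : ℕ} {p : ℝ} (hp₀ : 0 ≤ p) (hp₁ : p ≤ 1)
    (A : Set (SimpleGraph (Fin n))) : erProb n p A ≤ 1 := by
  rw [erProb_eq_erExpect]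
  exact (erExpect_mono hp₀ hp₁ fun G => by split_ifs <;> norm_num).trans_eq
    (erExpect_const_one p)

theorem one_sub_le_erProb_smallVerticesFarApart {n : ℕ} {p : ℝ} (hL : 1 ≤ log n)
    (hp : |n * p - log n| ≤ log n / 10) :
    1 - 6 * exp 5 * (log n ^ 2 * exp (-(log n / 2)))
      ≤ erProb n p (smallVerticesFarApart (log n / 100)) := by
  obtain ⟨hp₀, hp₁⟩ := nonneg_and_le_one_of_abs_mul_sub_log_le hL hp
  have h := one_sub_erExpect_smallVerticesFarApart_le (V := Fin n) hp₀ hp₁ (log n / 100)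
  rw [Fintype.card_fin] at h
  rw [erProb_eq_erExpect]
  linarith [nearPairBound_le hL hp]

theorem eventually_abs_mul_sub_log_le {α : ℕ → ℝ}
    (hαo : Tendsto (fun n : ℕ => α n / log n) atTop (𝓝 0)) :
    ∀ᶠ n : ℕ in atTop, 1 ≤ log n ∧ |n * ((log n + α n) / n) - log n| ≤ log n / 10 := by
  have hlog : Tendsto (fun n : ℕ => log n) atTop atTop :=
    tendsto_log_atTop.comp tendsto_natCast_atTop_atTop
  filter_upwards [hlog.eventually_ge_atTop 1, eventually_gt_atTop 0,
    hαo.eventually (Metric.ball_mem_nhds 0 (by norm_num : (0 : ℝ) < 1 / 10))] with n hL hn hα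
  refine ⟨hL, ?_⟩
  rw [mul_div_cancel₀ _ (by exact_mod_cast hn.ne'), add_sub_cancel_left]
  rw [dist_zero_right, norm_div, Real.norm_eq_abs, Real.norm_eq_abs,
    abs_of_pos (by linarith : 0 < log n), div_lt_iff₀ (by linarith)] at hα
  linarith

theorem er_small_vertices_far_apart_whp_general (α : ℕ → ℝ)
    (hαo : Filter.Tendsto (fun n : ℕ => α n / Real.log n) Filter.atTop (nhds 0)) :
    Filter.Tendsto
      (fun n : ℕ => erProb n ((Real.log n + α n) / n)
        {G | ∀ u v : Fin n, u ≠ v →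
          ((G.neighborSet u).ncard : ℝ) < Real.log n / 100 →
          ((G.neighborSet v).ncard : ℝ) < Real.log n / 100 →
          (2 : ℕ∞) < G.edist u v})
      Filter.atTop (nhds 1) := by
  have hregime := eventually_abs_mul_sub_log_le hαo
  refine tendsto_of_tendsto_of_tendsto_of_le_of_le' ?_ tendsto_const_nhds
    (hregime.mono fun n hn => one_sub_le_erProb_smallVerticesFarApart hn.1 hn.2)
    (hregime.mono fun n hn => erProb_le_one
      (nonneg_and_le_one_of_abs_mul_sub_log_le hn.1 hn.2).1
      (nonneg_and_le_one_of_abs_mul_sub_log_le hn.1 hn.2).2 _)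
  simpa using tendsto_const_nhds.sub (tendsto_log_sq_mul_exp_neg_half_log.const_mul (6 * exp 5))

/-- If `α n → +∞`, `α n = o(log n)`, and `p n = (log n + α n) / n`, then w.h.p. every pair of
distinct small vertices (degree less than `(log n)/100`) of `G(n, p n)` is at graph distance
greater than 2 (in particular, not adjacent and with no common neighbor). -/
theorem er_small_vertices_far_apart_whp (α : ℕ → ℝ)
    (hα : Filter.Tendsto α Filter.atTop Filter.atTop)
    (hαo : Filter.Tendsto (fun n : ℕ => α n / Real.log n) Filter.atTop (nhds 0)) :
    Filter.Tendsto
      (fun n : ℕ => erProb n ((Real.log n + α n) / n)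
        {G | ∀ u v : Fin n, u ≠ v →
          ((G.neighborSet u).ncard : ℝ) < Real.log n / 100 →
          ((G.neighborSet v).ncard : ℝ) < Real.log n / 100 →
          (2 : ℕ∞) < G.edist u v})
      Filter.atTop (nhds 1) :=
  er_small_vertices_far_apart_whp_general α hαo
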